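/- Threshold structure of the optimal policy (Theorem 1). Let V : X → ℝ be monotone with respect to ⪯ (as holds for the value function of the average-AoI MDP by Lemma 2). Fix a device k, a feasible action w* ∈ W with w*_k = (1,2), and values of all state components other than A_{d,k}; for a ∈ {0,…,Âd_k} let X(a) denote the state with A_{d,k} = a and the other components as fixed. Then the set Φ = {a ∈ {0,…,Âd_k} : J_V(X(a), w*) ≤ J_V(X(a), w') for all w' ∈ W} is upward closed: if a ∈ Φ and a ≤ a' ≤ Âd_k then a' ∈ Φ. Equivalently, setting φ = min Φ when Φ ≠ ∅, the action w* minimizes J_V(X(a'), ·) over W for every a' with φ ≤ a' ≤ Âd_k; i.e., the optimal scheduling-and-sampling decision w* with w*_k = (1,2) is threshold-based in the AoI A_{d,k} at device k. -/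

import Mathlib

/-!
Under `w*` device `k` samples a fresh update, so its successor states, and hence
`J_V(X(a), w*)`, do not depend on `a`. For any other action the successor states are monotone
in the current state, so `J_V(X(a), w')` is nondecreasing in `a` because `V` is monotone.
Optimality of `w*` at `a` therefore persists at every `a' ≥ a`.
-/

namespace AoI

/-- Per-device control action: idle `(0,0)`, continue the current in-transmission
update `(1,1)`, or sample and transmit a new update `(1,2)`. -/
inductive Act : Type
  | idle : Act
  | cont : Act
  | new  : Act
  deriving DecidableEq

instance : Fintype Act :=
  ⟨{Act.idle, Act.cont, Act.new}, by intro a; cases a <;> simp⟩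

/-- Per-device state `(A_d, A_r, D)`. -/
abbrev S : Type := ℕ × ℕ × ℕ

/-- Success successor under action `(1,1)`. -/
def sCont (L Ahd Ahr : ℕ) (x : S) : S :=
  if x.2.2 = 1 then (0, min (x.1 + 1) Ahr, L)
  else (min (x.1 + 1) Ahd, min (x.2.1 + 1) Ahr, x.2.2 - 1)

/-- Failure successor under `(1,1)`; this is also the unscheduled successor
`X_{k,un}` under action `(0,0)`. -/
def fCont (Ahd Ahr : ℕ) (x : S) : S :=
  (min (x.1 + 1) Ahd, min (x.2.1 + 1) Ahr, x.2.2)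

/-- Success successor under action `(1,2)`. -/
def sNew (L Ahr : ℕ) (x : S) : S := (1, min (x.2.1 + 1) Ahr, L - 1)

/-- Failure successor under action `(1,2)`. -/
def fNew (L Ahr : ℕ) (x : S) : S := (0, min (x.2.1 + 1) Ahr, L)

/-- Per-device transition kernel `P_k(x' | x, a)`. -/
def Pk (lam : ℝ) (L Ahd Ahr : ℕ) (x x' : S) : Act → ℝ
  | Act.idle => if x' = fCont Ahd Ahr x then 1 else 0
  | Act.cont =>
      (if x' = sCont L Ahd Ahr x then lam else 0) +
        (if x' = fCont Ahd Ahr x then 1 - lam else 0)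
  | Act.new =>
      (if x' = sNew L Ahr x then lam else 0) +
        (if x' = fNew L Ahr x then 1 - lam else 0)

/-- Per-device state space `{0,…,Âd} × {0,…,Âr} × {1,…,L}`. -/
def spaceS (L Ahd Ahr : ℕ) : Finset S :=
  Finset.range (Ahd + 1) ×ˢ (Finset.range (Ahr + 1) ×ˢ Finset.Icc 1 L)

/-- Joint state space `X = X_1 × ⋯ × X_K`. -/
def jointSpace {K : ℕ} (L Ahd Ahr : Fin K → ℕ) : Finset (Fin K → S) :=
  Fintype.piFinset fun k => spaceS (L k) (Ahd k) (Ahr k)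

/-- Joint transition kernel `P(X' | X, w) = ∏ₖ P_k(X'_k | X_k, w_k)`. -/
def Pjoint {K : ℕ} (lam : Fin K → ℝ) (L Ahd Ahr : Fin K → ℕ)
    (x x' : Fin K → S) (w : Fin K → Act) : ℝ :=
  ∏ k, Pk (lam k) (L k) (Ahd k) (Ahr k) (x k) (x' k) (w k)

/-- Feasible joint actions: at most `M` devices are scheduled. -/
def feasible (K M : ℕ) : Finset (Fin K → Act) :=
  Finset.univ.filter fun w => (Finset.univ.filter fun k => w k ≠ Act.idle).card ≤ M

lemma feasible_nonempty (K M : ℕ) : (feasible K M).Nonempty := by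
  refine ⟨fun _ => Act.idle, Finset.mem_filter.mpr ⟨Finset.mem_univ _, ?_⟩⟩
  simp

/-- The state–action cost `J_V(X, w) = Σₖ A_{r,k} + Σ_{X'∈X} P(X'|X,w) V(X')`. -/
def J {K : ℕ} (lam : Fin K → ℝ) (L Ahd Ahr : Fin K → ℕ)
    (V : (Fin K → S) → ℝ) (x : Fin K → S) (w : Fin K → Act) : ℝ :=
  (∑ k, ((x k).2.1 : ℝ)) +
    ∑ x' ∈ jointSpace L Ahd Ahr, Pjoint lam L Ahd Ahr x x' w * V x'

/-- Componentwise order on per-device states: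
`(A¹_d, A¹_r, D¹) ⪯ (A²_d, A²_r, D²)` iff `A¹_d ≤ A²_d`, `A¹_r ≤ A²_r`, `D¹ = D²`. -/
def xleS (x y : S) : Prop := x.1 ≤ y.1 ∧ x.2.1 ≤ y.2.1 ∧ x.2.2 = y.2.2


/-- The random outcome of a device's action is a success bit; an idle device "succeeds" with
probability one and then moves to `X_{k,un}`. -/
def outcomeWeight (lam : ℝ) : Act → Bool → ℝ
  | Act.idle, true => 1
  | Act.idle, false => 0
  | Act.cont, true => lam
  | Act.cont, false => 1 - lam
  | Act.new, true => lam
  | Act.new, false => 1 - lam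

def outcomeState (L Ahd Ahr : ℕ) : Act → Bool → S → S
  | Act.idle, _, x => fCont Ahd Ahr x
  | Act.cont, true, x => sCont L Ahd Ahr x
  | Act.cont, false, x => fCont Ahd Ahr x
  | Act.new, true, x => sNew L Ahr x
  | Act.new, false, x => fNew L Ahr x

lemma outcomeWeight_nonneg {lam : ℝ} (h0 : 0 ≤ lam) (h1 : lam ≤ 1) (a : Act) (b : Bool) :
    0 ≤ outcomeWeight lam a b := by
  cases a <;> cases b <;> simp only [outcomeWeight] <;> linarith

lemma Pk_eq_sum_outcomeWeight (lam : ℝ) (L Ahd Ahr : ℕ) (x x' : S) (a : Act) :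
    Pk lam L Ahd Ahr x x' a =
      ∑ b : Bool, outcomeWeight lam a b * if x' = outcomeState L Ahd Ahr a b x then 1 else 0 := by
  cases a <;> simp only [Pk, outcomeWeight, outcomeState, Fintype.sum_bool] <;> split_ifs <;>
    simp_all

lemma outcomeState_mem_spaceS {L Ahd Ahr : ℕ} (hL : 2 ≤ L) (hAd : 1 ≤ Ahd) (a : Act)
    (b : Bool) {x : S} (hx : x ∈ spaceS L Ahd Ahr) :
    outcomeState L Ahd Ahr a b x ∈ spaceS L Ahd Ahr := by
  simp only [spaceS, Finset.mem_product, Finset.mem_range, Finset.mem_Icc] at hx ⊢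
  cases a <;> cases b <;> simp only [outcomeState, fCont, sCont, sNew, fNew] <;>
    grind

lemma outcomeState_mono (L Ahd Ahr : ℕ) (a : Act) (b : Bool) {x y : S} (h : xleS x y) :
    xleS (outcomeState L Ahd Ahr a b x) (outcomeState L Ahd Ahr a b y) := by
  obtain ⟨h1, h2, h3⟩ := h
  cases a <;> cases b <;> simp only [outcomeState, fCont, sCont, sNew, fNew, xleS, h3] <;>
    grind

section Joint

variable {K : ℕ} (lam : Fin K → ℝ) (L Ahd Ahr : Fin K → ℕ)

def jointOutcomeWeight (w : Fin K → Act) (b : Fin K → Bool) : ℝ :=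
  ∏ k, outcomeWeight (lam k) (w k) (b k)

def jointOutcomeState (w : Fin K → Act) (b : Fin K → Bool) (x : Fin K → S) : Fin K → S :=
  fun k => outcomeState (L k) (Ahd k) (Ahr k) (w k) (b k) (x k)

lemma jointOutcomeWeight_nonneg {lam : Fin K → ℝ} (hlam : ∀ k, 0 ≤ lam k ∧ lam k ≤ 1)
    (w : Fin K → Act) (b : Fin K → Bool) : 0 ≤ jointOutcomeWeight lam w b :=
  Finset.prod_nonneg fun k _ => outcomeWeight_nonneg (hlam k).1 (hlam k).2 _ _

variable {L Ahd Ahr}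

lemma jointOutcomeState_mem (hL : ∀ k, 2 ≤ L k) (hAd : ∀ k, 1 ≤ Ahd k) (w : Fin K → Act)
    (b : Fin K → Bool) {x : Fin K → S} (hx : x ∈ jointSpace L Ahd Ahr) :
    jointOutcomeState L Ahd Ahr w b x ∈ jointSpace L Ahd Ahr :=
  Fintype.mem_piFinset.mpr fun k =>
    outcomeState_mem_spaceS (hL k) (hAd k) _ _ (Fintype.mem_piFinset.mp hx k)

lemma Pjoint_eq_sum_jointOutcomeWeight (x x' : Fin K → S) (w : Fin K → Act) :
    Pjoint lam L Ahd Ahr x x' w =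
      ∑ b : Fin K → Bool, jointOutcomeWeight lam w b *
        if x' = jointOutcomeState L Ahd Ahr w b x then 1 else 0 := by
  simp_rw [Pjoint, Pk_eq_sum_outcomeWeight, Finset.prod_univ_sum, Fintype.piFinset_univ]
  refine Finset.sum_congr rfl fun b _ => ?_
  rw [Finset.prod_mul_distrib, Finset.prod_ite_zero]
  simp [jointOutcomeState, funext_iff, jointOutcomeWeight]

lemma sum_Pjoint_mul_eq (hL : ∀ k, 2 ≤ L k) (hAd : ∀ k, 1 ≤ Ahd k) {x : Fin K → S}
    (hx : x ∈ jointSpace L Ahd Ahr) (w : Fin K → Act) (f : (Fin K → S) → ℝ) :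
    ∑ x' ∈ jointSpace L Ahd Ahr, Pjoint lam L Ahd Ahr x x' w * f x' =
      ∑ b : Fin K → Bool,
        jointOutcomeWeight lam w b * f (jointOutcomeState L Ahd Ahr w b x) := by
  simp_rw [Pjoint_eq_sum_jointOutcomeWeight, Finset.sum_mul, mul_assoc, ite_mul, one_mul,
    zero_mul]
  rw [Finset.sum_comm]
  refine Finset.sum_congr rfl fun b _ => ?_
  rw [← Finset.mul_sum, Finset.sum_ite_eq', if_pos (jointOutcomeState_mem hL hAd w b hx)]

lemma J_mono (hlam : ∀ k, 0 ≤ lam k ∧ lam k ≤ 1) (hL : ∀ k, 2 ≤ L k)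
    (hAd : ∀ k, 1 ≤ Ahd k) {V : (Fin K → S) → ℝ}
    (hV : ∀ x1 ∈ jointSpace L Ahd Ahr, ∀ x2 ∈ jointSpace L Ahd Ahr,
      (∀ k, xleS (x1 k) (x2 k)) → V x1 ≤ V x2)
    {x y : Fin K → S} (hx : x ∈ jointSpace L Ahd Ahr) (hy : y ∈ jointSpace L Ahd Ahr)
    (hxy : ∀ k, xleS (x k) (y k)) (w : Fin K → Act) :
    J lam L Ahd Ahr V x w ≤ J lam L Ahd Ahr V y w := by
  rw [J, J, sum_Pjoint_mul_eq lam hL hAd hx, sum_Pjoint_mul_eq lam hL hAd hy]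
  gcongr with j _ b
  · exact (hxy j).2.1
  · exact jointOutcomeWeight_nonneg hlam w b
  · exact hV _ (jointOutcomeState_mem hL hAd w b hx) _ (jointOutcomeState_mem hL hAd w b hy)
      fun j => outcomeState_mono _ _ _ _ _ (hxy j)

lemma J_update_fst_eq_of_new (V : (Fin K → S) → ℝ) (x : Fin K → S) {w : Fin K → Act}
    {k : Fin K} (hw : w k = Act.new) (a a' : ℕ) (s : ℕ × ℕ) :
    J lam L Ahd Ahr V (Function.update x k (a, s)) w =
      J lam L Ahd Ahr V (Function.update x k (a', s)) w := by
  have hstate : ∀ j, (Function.update x k (a, s) j).2 = (Function.update x k (a', s) j).2 := by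
    intro j
    rcases eq_or_ne j k with rfl | hj
    · simp
    · simp [hj]
  have hPk : ∀ j x', Pk (lam j) (L j) (Ahd j) (Ahr j) (Function.update x k (a, s) j) x' (w j) =
      Pk (lam j) (L j) (Ahd j) (Ahr j) (Function.update x k (a', s) j) x' (w j) := by
    intro j x'
    rcases eq_or_ne j k with rfl | hj
    · simp only [Function.update_self, hw]
      rfl
    · simp [hj]
  simp only [J, Pjoint, hPk, hstate]

end Joint

lemma update_fst_mem_jointSpace {K : ℕ} {L Ahd Ahr : Fin K → ℕ} {x : Fin K → S}
    (hx : x ∈ jointSpace L Ahd Ahr) {k : Fin K} {a : ℕ} (ha : a ≤ Ahd k) :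
    Function.update x k (a, (x k).2) ∈ jointSpace L Ahd Ahr := by
  refine Fintype.mem_piFinset.mpr fun j => ?_
  have hxj := Fintype.mem_piFinset.mp hx j
  rcases eq_or_ne j k with rfl | hj
  · simp only [spaceS, Finset.mem_product, Finset.mem_range, Function.update_self] at hxj ⊢
    exact ⟨by omega, hxj.2⟩
  · rwa [Function.update_of_ne hj]

lemma xleS_update_fst {K : ℕ} (x : Fin K → S) (k : Fin K) (s : ℕ × ℕ) {a a' : ℕ}
    (h : a ≤ a') (j : Fin K) :
    xleS (Function.update x k (a, s) j) (Function.update x k (a', s) j) := by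
  rcases eq_or_ne j k with rfl | hj
  · simpa [xleS] using h
  · simp [xleS, hj]

theorem threshold_structure_optimal_policy_general
    (K M : ℕ)
    (lam : Fin K → ℝ) (L Ahd Ahr : Fin K → ℕ)
    (hlam : ∀ k, 0 < lam k ∧ lam k ≤ 1)
    (hL : ∀ k, 2 ≤ L k) (hAd : ∀ k, 1 ≤ Ahd k)
    (V : (Fin K → S) → ℝ)
    (hV : ∀ x1 ∈ jointSpace L Ahd Ahr, ∀ x2 ∈ jointSpace L Ahd Ahr,
      (∀ k, xleS (x1 k) (x2 k)) → V x1 ≤ V x2)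
    (k : Fin K)
    (wstar : Fin K → Act) (hwk : wstar k = Act.new)
    (x0 : Fin K → S) (hx0 : x0 ∈ jointSpace L Ahd Ahr) :
    ∀ a a' : ℕ, a ≤ a' → a' ≤ Ahd k →
      (∀ w' ∈ feasible K M,
        J lam L Ahd Ahr V (Function.update x0 k (a, (x0 k).2)) wstar ≤
          J lam L Ahd Ahr V (Function.update x0 k (a, (x0 k).2)) w') →
      (∀ w' ∈ feasible K M,
        J lam L Ahd Ahr V (Function.update x0 k (a', (x0 k).2)) wstar ≤
          J lam L Ahd Ahr V (Function.update x0 k (a', (x0 k).2)) w') := by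
  intro a a' haa' ha' hopt w' hw'
  have hlam' : ∀ j, 0 ≤ lam j ∧ lam j ≤ 1 := fun j => ⟨(hlam j).1.le, (hlam j).2⟩
  calc _ = J lam L Ahd Ahr V (Function.update x0 k (a, (x0 k).2)) wstar :=
        J_update_fst_eq_of_new lam V x0 hwk a' a _
    _ ≤ J lam L Ahd Ahr V (Function.update x0 k (a, (x0 k).2)) w' := hopt w' hw'
    _ ≤ _ := J_mono lam hlam' hL hAd hV (update_fst_mem_jointSpace hx0 (haa'.trans ha'))
        (update_fst_mem_jointSpace hx0 ha') (xleS_update_fst x0 k _ haa') w'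

/-- Theorem 1: threshold structure of the optimal policy. With
all state components other than `A_{d,k}` fixed (encoded by `x0`), the set of
values `a` of `A_{d,k}` at which the action `w*` (with `w*_k = (1,2)`) minimizes
`J_V(X(a), ·)` over `W` is upward closed in `{0,…,Âd_k}`. -/
theorem threshold_structure_optimal_policy
    (K M : ℕ) (hK : 1 ≤ K) (hM1 : 1 ≤ M) (hM2 : M ≤ K)
    (lam : Fin K → ℝ) (L Ahd Ahr : Fin K → ℕ)
    (hlam : ∀ k, 0 < lam k ∧ lam k ≤ 1)
    (hL : ∀ k, 2 ≤ L k) (hAd : ∀ k, 1 ≤ Ahd k) (hAr : ∀ k, 1 ≤ Ahr k)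
    (V : (Fin K → S) → ℝ)
    (hV : ∀ x1 ∈ jointSpace L Ahd Ahr, ∀ x2 ∈ jointSpace L Ahd Ahr,
      (∀ k, xleS (x1 k) (x2 k)) → V x1 ≤ V x2)
    (k : Fin K)
    (wstar : Fin K → Act) (hwfeas : wstar ∈ feasible K M) (hwk : wstar k = Act.new)
    (x0 : Fin K → S) (hx0 : x0 ∈ jointSpace L Ahd Ahr) :
    ∀ a a' : ℕ, a ≤ a' → a' ≤ Ahd k →
      (∀ w' ∈ feasible K M,
        J lam L Ahd Ahr V (Function.update x0 k (a, (x0 k).2)) wstar ≤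
          J lam L Ahd Ahr V (Function.update x0 k (a, (x0 k).2)) w') →
      (∀ w' ∈ feasible K M,
        J lam L Ahd Ahr V (Function.update x0 k (a', (x0 k).2)) wstar ≤
          J lam L Ahd Ahr V (Function.update x0 k (a', (x0 k).2)) w') :=
  threshold_structure_optimal_policy_general K M lam L Ahd Ahr hlam hL hAd V hV k wstar hwk x0 hx0

end AoI
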